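/- arXiv:1302.3235 — 6 statements merged into one kernel-verified Lean document; each statement's English description precedes it below -/
import Mathlib

section
/- If x₁ ≥ x₂ > 0 and d₁ ≥ d₂ > 0 satisfy x₁² + x₂² ≥ d₁² + d₂², 1/x₁² + 1/x₂² ≥ 1/d₁² + 1/d₂², and x₁x₂ = d₁d₂, then (log x₁)² + (log x₂)² ≥ (log d₁)² + (log d₂)². -/
/-!
Put `u = log x₁ - log x₂` and `v = log d₁ - log d₂`. Since `x² + y² = 2xy cosh (log (x / y))` and
the products agree, the first hypothesis says `cosh u ≥ cosh v`, i.e. `|u| ≥ |v|`. The sums of the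
logarithms agree as well, and `a² + b² = ((a + b)² + (a - b)²) / 2` finishes the proof.
-/

open Real

theorem sq_add_sq_eq_two_mul_mul_cosh_log_div {x y : ℝ} (hx : 0 < x) (hy : 0 < y) :
    x ^ 2 + y ^ 2 = 2 * (x * y) * cosh (log (x / y)) := by
  rw [cosh_log (div_pos hx hy)]
  field_simp

theorem abs_log_div_le_of_mul_eq_of_sq_add_sq_le {x₁ x₂ d₁ d₂ : ℝ} (hx₁ : 0 < x₁) (hx₂ : 0 < x₂)
    (hd₁ : 0 < d₁) (hd₂ : 0 < d₂) (hmul : x₁ * x₂ = d₁ * d₂)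
    (hsq : d₁ ^ 2 + d₂ ^ 2 ≤ x₁ ^ 2 + x₂ ^ 2) :
    |log (d₁ / d₂)| ≤ |log (x₁ / x₂)| := by
  rw [← cosh_le_cosh]
  rw [sq_add_sq_eq_two_mul_mul_cosh_log_div hx₁ hx₂,
    sq_add_sq_eq_two_mul_mul_cosh_log_div hd₁ hd₂, hmul] at hsq
  exact le_of_mul_le_mul_left hsq (by positivity)

theorem sq_add_sq_le_of_add_eq_of_abs_sub_le {R : Type*} [Field R] [LinearOrder R]
    [IsStrictOrderedRing R] {a b c d : R} (hadd : a + b = c + d) (hsub : |c - d| ≤ |a - b|) :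
    c ^ 2 + d ^ 2 ≤ a ^ 2 + b ^ 2 := by
  have hsq : (c - d) ^ 2 ≤ (a - b) ^ 2 := sq_le_sq.mpr hsub
  nlinarith [congrArg (· ^ 2) hadd]

theorem sum_sq_log_ineq_two_general (x₁ x₂ d₁ d₂ : ℝ)
    (hx : x₁ ≥ x₂) (hx2 : x₂ > 0) (hd : d₁ ≥ d₂) (hd2 : d₂ > 0)
    (h1 : x₁ ^ 2 + x₂ ^ 2 ≥ d₁ ^ 2 + d₂ ^ 2)
    (h3 : x₁ * x₂ = d₁ * d₂) :
    (Real.log x₁) ^ 2 + (Real.log x₂) ^ 2 ≥ (Real.log d₁) ^ 2 + (Real.log d₂) ^ 2 := by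
  have hx1 : 0 < x₁ := hx2.trans_le hx
  have hd1 : 0 < d₁ := hd2.trans_le hd
  have hadd : log x₁ + log x₂ = log d₁ + log d₂ := by
    rw [← log_mul hx1.ne' hx2.ne', ← log_mul hd1.ne' hd2.ne', h3]
  have hsub : |log d₁ - log d₂| ≤ |log x₁ - log x₂| := by
    rw [← log_div hx1.ne' hx2.ne', ← log_div hd1.ne' hd2.ne']
    exact abs_log_div_le_of_mul_eq_of_sq_add_sq_le hx1 hx2 hd1 hd2 h3 h1
  exact sq_add_sq_le_of_add_eq_of_abs_sub_le hadd hsub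

/-- The sum of squared logarithms inequality in dimension two. -/
theorem sum_sq_log_ineq_two (x₁ x₂ d₁ d₂ : ℝ)
    (hx : x₁ ≥ x₂) (hx2 : x₂ > 0) (hd : d₁ ≥ d₂) (hd2 : d₂ > 0)
    (h1 : x₁ ^ 2 + x₂ ^ 2 ≥ d₁ ^ 2 + d₂ ^ 2)
    (h2 : 1 / x₁ ^ 2 + 1 / x₂ ^ 2 ≥ 1 / d₁ ^ 2 + 1 / d₂ ^ 2)
    (h3 : x₁ * x₂ = d₁ * d₂) :
    (Real.log x₁) ^ 2 + (Real.log x₂) ^ 2 ≥ (Real.log d₁) ^ 2 + (Real.log d₂) ^ 2 :=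
  sum_sq_log_ineq_two_general x₁ x₂ d₁ d₂ hx hx2 hd hd2 h1 h3
end

section
/- If x₁, x₂, x₃ > 0 and d₁, d₂, d₃ > 0 satisfy x₁² + x₂² + x₃² ≥ d₁² + d₂² + d₃², 1/x₁² + 1/x₂² + 1/x₃² ≥ 1/d₁² + 1/d₂² + 1/d₃², and x₁x₂x₃ = d₁d₂d₃, then (log x₁)² + (log x₂)² + (log x₃)² ≥ (log d₁)² + (log d₂)² + (log d₃)². -/
/-!
For `y > 0` put `K y t = (log (y + t) - log (1 + t)) / t - log y / (t * (1 + t))`. Then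
`∂K/∂y = (y - 1) / (y (1 + t) (y + t))`, whose integral over `t > 0` is `log y / y`, and `K 1 = 0`;
hence `∫₀^∞ K y t dt = (log y)² / 2`. For positive `yᵢ, zᵢ` with `∏ zᵢ = ∏ yᵢ` the `log y / (t (1 + t))`
terms cancel in `∑ (K yᵢ t - K zᵢ t) = (log ∏ (yᵢ + t) - log ∏ (zᵢ + t)) / t`, so
`∏ (zᵢ + t) ≤ ∏ (yᵢ + t)` for all `t > 0` integrates to `∑ (log zᵢ)² ≤ ∑ (log yᵢ)²`.
With `yᵢ = xᵢ²` and `zᵢ = dᵢ²` the three hypotheses compare the elementary symmetric functions of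
the `zᵢ` and the `yᵢ`, which are the coefficients of `∏ (zᵢ + t)` and `∏ (yᵢ + t)`.
-/

open Real MeasureTheory Set Filter Topology Finset

namespace SumSqLog

noncomputable def logSqKernel (y t : ℝ) : ℝ :=
  (log (y + t) - log (1 + t)) / t - log y / (t * (1 + t))

noncomputable def logSqKernelDeriv (y t : ℝ) : ℝ :=
  (y - 1) / (y * (1 + t) * (y + t))

lemma logSqKernel_one (t : ℝ) : logSqKernel 1 t = 0 := by
  simp [logSqKernel]

lemma measurable_logSqKernel (y : ℝ) : Measurable (logSqKernel y) := by
  unfold logSqKernel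
  fun_prop

lemma measurable_logSqKernelDeriv (y : ℝ) : Measurable (logSqKernelDeriv y) := by
  unfold logSqKernelDeriv
  fun_prop

lemma hasDerivAt_logSqKernel {y t : ℝ} (hy : 0 < y) (ht : 0 < t) :
    HasDerivAt (logSqKernel · t) (logSqKernelDeriv y t) y := by
  have hlog : HasDerivAt (fun y => log (y + t)) (y + t)⁻¹ y := by
    simpa using ((hasDerivAt_id y).add_const t).log (by positivity)
  refine (((hlog.sub_const (log (1 + t))).div_const t).fun_sub
    ((hasDerivAt_log hy.ne').div_const (t * (1 + t)))).congr_deriv ?_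
  unfold logSqKernelDeriv
  field_simp
  ring

lemma abs_logSqKernelDeriv_le {m y t : ℝ} (hm : 0 < m) (hm₁ : m ≤ 1) (hmy : m ≤ y)
    (ht : 0 ≤ t) : |logSqKernelDeriv y t| ≤ |y - 1| / m ^ 2 * (1 + t ^ 2)⁻¹ := by
  have hy : 0 < y := hm.trans_le hmy
  have hmt : m * (1 + t) ≤ y + t := by nlinarith [mul_le_mul_of_nonneg_right hm₁ ht]
  have hden : m ^ 2 * (1 + t ^ 2) ≤ y * (1 + t) * (y + t) :=
    calc m ^ 2 * (1 + t ^ 2) ≤ m * (1 + t) * (m * (1 + t)) := by nlinarith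
      _ ≤ y * (1 + t) * (y + t) := by gcongr
  rw [logSqKernelDeriv, abs_div, abs_of_pos (by positivity : 0 < y * (1 + t) * (y + t)),
    ← div_eq_mul_inv, div_div]
  exact div_le_div_of_nonneg_left (abs_nonneg _) (by positivity) hden

lemma abs_logSqKernel_le {y t : ℝ} (hy : 0 < y) (ht : 0 < t) :
    |logSqKernel y t| ≤ (y - 1) ^ 2 / min y 1 ^ 2 * (1 + t ^ 2)⁻¹ := by
  have hm : 0 < min y 1 := lt_min hy one_pos
  have hmem : ∀ s ∈ uIcc 1 y, min y 1 ≤ s := fun s hs => min_comm 1 y ▸ hs.1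
  have hmvt := Convex.norm_image_sub_le_of_norm_hasDerivWithin_le (f := (logSqKernel · t))
    (C := |y - 1| / min y 1 ^ 2 * (1 + t ^ 2)⁻¹)
    (fun s hs => (hasDerivAt_logSqKernel (hm.trans_le (hmem s hs)) ht).hasDerivWithinAt)
    (fun s hs => (abs_logSqKernelDeriv_le hm (min_le_right y 1) (hmem s hs) ht.le).trans
      (by gcongr ?_ / _ * _; exact abs_sub_left_of_mem_uIcc hs))
    (convex_uIcc 1 y) left_mem_uIcc right_mem_uIcc
  rw [logSqKernel_one, sub_zero, Real.norm_eq_abs, Real.norm_eq_abs] at hmvt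
  calc |logSqKernel y t| ≤ |y - 1| / min y 1 ^ 2 * (1 + t ^ 2)⁻¹ * |y - 1| := hmvt
    _ = (y - 1) ^ 2 / min y 1 ^ 2 * (1 + t ^ 2)⁻¹ := by rw [← sq_abs (y - 1)]; ring

lemma integrableOn_logSqKernel {y : ℝ} (hy : 0 < y) : IntegrableOn (logSqKernel y) (Ioi 0) :=
  (integrable_inv_one_add_sq.const_mul _).integrableOn.mono'
    (measurable_logSqKernel y).aestronglyMeasurable
    ((ae_restrict_iff' measurableSet_Ioi).2 (.of_forall fun _ ht => abs_logSqKernel_le hy ht))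

lemma integral_logSqKernelDeriv {y : ℝ} (hy : 0 < y) :
    ∫ t in Ioi 0, logSqKernelDeriv y t = log y / y := by
  have hm : 0 < min y 1 := lt_min hy one_pos
  have hint : IntegrableOn (logSqKernelDeriv y) (Ioi 0) :=
    (integrable_inv_one_add_sq.const_mul _).integrableOn.mono'
      (measurable_logSqKernelDeriv y).aestronglyMeasurable
      ((ae_restrict_iff' measurableSet_Ioi).2 (.of_forall fun _ ht =>
        abs_logSqKernelDeriv_le hm (min_le_right y 1) (min_le_left y 1) (le_of_lt ht)))
  have hderiv : ∀ t ∈ Ici (0 : ℝ),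
      HasDerivAt (fun t => (log (t + 1) - log (t + y)) / y) (logSqKernelDeriv y t) t := by
    intro t ht
    have ht : 0 ≤ t := ht
    have h₁ : HasDerivAt (fun t => log (t + 1)) (t + 1)⁻¹ t := by
      simpa using ((hasDerivAt_id t).add_const 1).log (by positivity)
    have h₂ : HasDerivAt (fun t => log (t + y)) (t + y)⁻¹ t := by
      simpa using ((hasDerivAt_id t).add_const y).log (by positivity)
    refine ((h₁.fun_sub h₂).div_const y).congr_deriv ?_
    unfold logSqKernelDeriv
    field_simp
    ring
  have hlim : Tendsto (fun t => (log (t + 1) - log (t + y)) / y) atTop (𝓝 0) := by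
    simpa using ((tendsto_log_comp_add_sub_log 1).sub (tendsto_log_comp_add_sub_log y)).div_const y
  rw [integral_Ioi_of_hasDerivAt_of_tendsto' hderiv hint hlim]
  simp [neg_div]

lemma hasDerivAt_integral_logSqKernel {y : ℝ} (hy : 0 < y) :
    HasDerivAt (fun y => ∫ t in Ioi 0, logSqKernel y t) (log y / y) y := by
  set m := min (y / 2) 1
  have hm : 0 < m := lt_min (half_pos hy) one_pos
  have hball : ∀ x ∈ Metric.ball y (y / 2), m ≤ x ∧ |x - 1| ≤ 3 * y / 2 + 1 := by
    intro x hx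
    rw [Metric.mem_ball, Real.dist_eq, abs_lt] at hx
    exact ⟨(min_le_left _ _).trans (by linarith), abs_sub_le_iff.2 ⟨by linarith, by linarith⟩⟩
  have hmain := hasDerivAt_integral_of_dominated_loc_of_deriv_le (μ := volume.restrict (Ioi 0))
    (F' := logSqKernelDeriv) (bound := fun t => (3 * y / 2 + 1) / m ^ 2 * (1 + t ^ 2)⁻¹)
    (Metric.ball_mem_nhds y (half_pos hy))
    (.of_forall fun x => (measurable_logSqKernel x).aestronglyMeasurable)
    (integrableOn_logSqKernel hy) (measurable_logSqKernelDeriv y).aestronglyMeasurable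
    ((ae_restrict_iff' measurableSet_Ioi).2 (.of_forall fun t ht x hx =>
      (abs_logSqKernelDeriv_le hm (min_le_right _ _) (hball x hx).1 (le_of_lt ht)).trans
        (by gcongr; exact (hball x hx).2)))
    (integrable_inv_one_add_sq.const_mul _).integrableOn
    ((ae_restrict_iff' measurableSet_Ioi).2 (.of_forall fun t ht x hx =>
      hasDerivAt_logSqKernel (hm.trans_le (hball x hx).1) ht))
  rw [← integral_logSqKernelDeriv hy]
  exact hmain.2

theorem integral_logSqKernel {y : ℝ} (hy : 0 < y) :
    ∫ t in Ioi 0, logSqKernel y t = log y ^ 2 / 2 := by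
  have hderiv : ∀ x ∈ Ioi (0 : ℝ),
      HasDerivAt (fun y => (∫ t in Ioi 0, logSqKernel y t) - log y ^ 2 / 2) 0 x := by
    intro x hx
    refine ((hasDerivAt_integral_logSqKernel hx).fun_sub
      (((hasDerivAt_log (ne_of_gt hx)).fun_pow 2).div_const 2)).congr_deriv ?_
    field_simp
    ring
  have hconst := isOpen_Ioi.is_const_of_deriv_eq_zero isPreconnected_Ioi
    (fun x hx => (hderiv x hx).differentiableAt.differentiableWithinAt)
    (fun x hx => (hderiv x hx).deriv) hy (mem_Ioi.2 one_pos)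
  simp only [logSqKernel_one, integral_zero, log_one] at hconst
  linarith


lemma sum_logSqKernel_eq {ι : Type*} (s : Finset ι) {y : ι → ℝ} (hy : ∀ i ∈ s, 0 < y i)
    {t : ℝ} (ht : 0 < t) :
    ∑ i ∈ s, logSqKernel (y i) t =
      (log (∏ i ∈ s, (y i + t)) - #s * log (1 + t)) / t - log (∏ i ∈ s, y i) / (t * (1 + t)) := by
  rw [log_prod fun i hi => (add_pos (hy i hi) ht).ne', log_prod fun i hi => (hy i hi).ne']
  simp only [logSqKernel, sum_sub_distrib, ← sum_div, sum_const, nsmul_eq_mul]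

lemma sum_logSqKernel_le_of_prod_add_le {ι : Type*} {s : Finset ι} {y z : ι → ℝ}
    (hy : ∀ i ∈ s, 0 < y i) (hz : ∀ i ∈ s, 0 < z i) (hprod : ∏ i ∈ s, z i = ∏ i ∈ s, y i)
    {t : ℝ} (ht : 0 < t) (hle : ∏ i ∈ s, (z i + t) ≤ ∏ i ∈ s, (y i + t)) :
    ∑ i ∈ s, logSqKernel (z i) t ≤ ∑ i ∈ s, logSqKernel (y i) t := by
  rw [sum_logSqKernel_eq s hy ht, sum_logSqKernel_eq s hz ht, hprod]
  gcongr
  exact prod_pos fun i hi => add_pos (hz i hi) ht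

theorem sum_sq_log_le_of_prod_add_le {ι : Type*} {s : Finset ι} {y z : ι → ℝ}
    (hy : ∀ i ∈ s, 0 < y i) (hz : ∀ i ∈ s, 0 < z i) (hprod : ∏ i ∈ s, z i = ∏ i ∈ s, y i)
    (hle : ∀ t > 0, ∏ i ∈ s, (z i + t) ≤ ∏ i ∈ s, (y i + t)) :
    ∑ i ∈ s, log (z i) ^ 2 ≤ ∑ i ∈ s, log (y i) ^ 2 := by
  have hyint : ∀ i ∈ s, IntegrableOn (logSqKernel (y i)) (Ioi 0) :=
    fun i hi => integrableOn_logSqKernel (hy i hi)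
  have hzint : ∀ i ∈ s, IntegrableOn (logSqKernel (z i)) (Ioi 0) :=
    fun i hi => integrableOn_logSqKernel (hz i hi)
  have hmono : ∫ t in Ioi 0, ∑ i ∈ s, logSqKernel (z i) t ≤
      ∫ t in Ioi 0, ∑ i ∈ s, logSqKernel (y i) t :=
    setIntegral_mono_on (integrable_finsetSum s (hzint))
      (integrable_finsetSum s (hyint)) measurableSet_Ioi
      fun t ht => sum_logSqKernel_le_of_prod_add_le hy hz hprod ht (hle t ht)
  rw [integral_finsetSum s (hzint), integral_finsetSum s (hyint),
    sum_congr rfl fun i hi => integral_logSqKernel (hz i hi),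
    sum_congr rfl fun i hi => integral_logSqKernel (hy i hi), ← sum_div, ← sum_div] at hmono
  linarith

lemma prod_three_add_le {y₁ y₂ y₃ z₁ z₂ z₃ t : ℝ} (ht : 0 ≤ t)
    (h₁ : z₁ + z₂ + z₃ ≤ y₁ + y₂ + y₃)
    (h₂ : z₁ * z₂ + z₁ * z₃ + z₂ * z₃ ≤ y₁ * y₂ + y₁ * y₃ + y₂ * y₃)
    (h₃ : z₁ * z₂ * z₃ = y₁ * y₂ * y₃) :
    (z₁ + t) * (z₂ + t) * (z₃ + t) ≤ (y₁ + t) * (y₂ + t) * (y₃ + t) := by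
  nlinarith [mul_le_mul_of_nonneg_left h₁ (sq_nonneg t), mul_le_mul_of_nonneg_left h₂ ht]

theorem sum_sq_log_three_le {y₁ y₂ y₃ z₁ z₂ z₃ : ℝ} (hy₁ : 0 < y₁) (hy₂ : 0 < y₂) (hy₃ : 0 < y₃)
    (hz₁ : 0 < z₁) (hz₂ : 0 < z₂) (hz₃ : 0 < z₃)
    (h₁ : z₁ + z₂ + z₃ ≤ y₁ + y₂ + y₃)
    (h₂ : z₁ * z₂ + z₁ * z₃ + z₂ * z₃ ≤ y₁ * y₂ + y₁ * y₃ + y₂ * y₃)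
    (h₃ : z₁ * z₂ * z₃ = y₁ * y₂ * y₃) :
    log z₁ ^ 2 + log z₂ ^ 2 + log z₃ ^ 2 ≤ log y₁ ^ 2 + log y₂ ^ 2 + log y₃ ^ 2 := by
  simpa [Fin.sum_univ_three] using
    sum_sq_log_le_of_prod_add_le (s := univ) (y := ![y₁, y₂, y₃]) (z := ![z₁, z₂, z₃])
      (by simp [Fin.forall_fin_succ, *]) (by simp [Fin.forall_fin_succ, *])
      (by simpa [Fin.prod_univ_three] using h₃)
      (fun t ht => by simpa [Fin.prod_univ_three] using prod_three_add_le ht.le h₁ h₂ h₃)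

lemma mul_add_mul_add_mul_eq {a b c : ℝ} (ha : a ≠ 0) (hb : b ≠ 0) (hc : c ≠ 0) :
    a * b + a * c + b * c = a * b * c * (1 / a + 1 / b + 1 / c) := by
  field_simp
  ring

end SumSqLog

open SumSqLog

/-- The sum of squared logarithms inequality in dimension three. -/
theorem sum_sq_log_ineq_three (x₁ x₂ x₃ d₁ d₂ d₃ : ℝ)
    (hx1 : x₁ > 0) (hx2 : x₂ > 0) (hx3 : x₃ > 0)
    (hd1 : d₁ > 0) (hd2 : d₂ > 0) (hd3 : d₃ > 0)
    (h1 : x₁ ^ 2 + x₂ ^ 2 + x₃ ^ 2 ≥ d₁ ^ 2 + d₂ ^ 2 + d₃ ^ 2)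
    (h2 : 1 / x₁ ^ 2 + 1 / x₂ ^ 2 + 1 / x₃ ^ 2 ≥ 1 / d₁ ^ 2 + 1 / d₂ ^ 2 + 1 / d₃ ^ 2)
    (h3 : x₁ * x₂ * x₃ = d₁ * d₂ * d₃) :
    (Real.log x₁) ^ 2 + (Real.log x₂) ^ 2 + (Real.log x₃) ^ 2 ≥
      (Real.log d₁) ^ 2 + (Real.log d₂) ^ 2 + (Real.log d₃) ^ 2 := by
  have hprod : d₁ ^ 2 * d₂ ^ 2 * d₃ ^ 2 = x₁ ^ 2 * x₂ ^ 2 * x₃ ^ 2 := by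
    simp only [← mul_pow, h3]
  have hpairs : d₁ ^ 2 * d₂ ^ 2 + d₁ ^ 2 * d₃ ^ 2 + d₂ ^ 2 * d₃ ^ 2 ≤
      x₁ ^ 2 * x₂ ^ 2 + x₁ ^ 2 * x₃ ^ 2 + x₂ ^ 2 * x₃ ^ 2 := by
    rw [mul_add_mul_add_mul_eq (by positivity) (by positivity) (by positivity),
      mul_add_mul_add_mul_eq (by positivity) (by positivity) (by positivity), hprod]
    gcongr
  have key := sum_sq_log_three_le (by positivity) (by positivity) (by positivity)
    (by positivity) (by positivity) (by positivity) h1 hpairs hprod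
  simp only [log_pow, Nat.cast_ofNat, mul_pow] at key
  linarith
end

section
/- Equality holds in the three-dimensional sum of squared logarithms inequality, i.e., (log x₁)² + (log x₂)² + (log x₃)² = (log d₁)² + (log d₂)² + (log d₃)² under the hypotheses x₁²+x₂²+x₃² ≥ d₁²+d₂²+d₃², Σ 1/xᵢ² ≥ Σ 1/dᵢ², x₁x₂x₃ = d₁d₂d₃, if and only if the multisets {x₁,x₂,x₃} and {d₁,d₂,d₃} sorted in decreasing order are equal. -/
/-!
Everything rests on the representation, for `a > 0`,
`log a ^ 2 = ∫₀^∞ K(a, t) dt`, `K(a, t) = 2/t (log (a + t) - log (1 + t)) - 2 log a / (t (1 + t))`: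
both sides vanish at `a = 1`, and both have `a`-derivative `2 log a / a`.
When `∏ yᵢ = ∏ fᵢ` the `log a` terms cancel, so
`∑ K(yᵢ, t) - ∑ K(fᵢ, t) = 2/t · log (P(t) / Q(t))` with `P(t) = ∏ (yᵢ + t)`, `Q(t) = ∏ (fᵢ + t)`.
For `yᵢ = xᵢ²`, `fᵢ = dᵢ²` the hypotheses give
`P(t) - Q(t) = (e₁(y) - e₁(f)) t² + (e₂(y) - e₂(f)) t ≥ 0`, so this integrand is continuous and
nonnegative. Equal sums of squared logarithms make its integral vanish, hence `P = Q`: the two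
triples have the same elementary symmetric functions, and ordered triples with that property
coincide.
-/

open Real MeasureTheory Set Filter Topology

noncomputable def logSqKernel (a t : ℝ) : ℝ :=
  2 / t * (log (a + t) - log (1 + t)) - 2 * log a / (t * (1 + t))

noncomputable def logSqKernelDeriv (a t : ℝ) : ℝ :=
  2 * (a - 1) / (a * (a + t) * (1 + t))

lemma logSqKernel_one (t : ℝ) : logSqKernel 1 t = 0 := by
  simp [logSqKernel]

lemma hasDerivAt_logSqKernel {a t : ℝ} (ha : 0 < a) (ht : 0 < t) :
    HasDerivAt (logSqKernel · t) (logSqKernelDeriv a t) a := by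
  have h : HasDerivAt (logSqKernel · t) (2 / t * (1 / (a + t)) - 2 * a⁻¹ / (t * (1 + t))) a :=
    ((((hasDerivAt_id a).add_const t).log (by positivity)).sub_const (log (1 + t))
      |>.const_mul (2 / t)).sub (((hasDerivAt_log ha.ne').const_mul 2).div_const (t * (1 + t)))
  convert h using 1
  rw [logSqKernelDeriv]
  field_simp
  ring

lemma continuousOn_logSqKernel {a : ℝ} (ha : 0 < a) : ContinuousOn (logSqKernel a) (Ioi 0) := by
  intro t (ht : 0 < t)
  unfold logSqKernel
  exact ContinuousAt.continuousWithinAt (by fun_prop (disch := positivity))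

lemma continuousOn_logSqKernelDeriv {a : ℝ} (ha : 0 < a) :
    ContinuousOn (logSqKernelDeriv a) (Ioi 0) := by
  intro t (ht : 0 < t)
  unfold logSqKernelDeriv
  exact ContinuousAt.continuousWithinAt (by fun_prop (disch := positivity))

lemma integrableOn_inv_add_sq {m : ℝ} (hm : 0 < m) :
    IntegrableOn (fun t ↦ ((m + t) ^ 2)⁻¹) (Ioi 0) := by
  refine (integrableOn_add_rpow_Ioi_of_lt (by norm_num : (-2 : ℝ) < -1)
    (neg_lt_zero.2 hm)).congr_fun (fun t (ht : 0 < t) ↦ ?_) measurableSet_Ioi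
  simp only [add_comm t m, rpow_neg (by positivity : (0:ℝ) ≤ m + t), rpow_two]

lemma abs_logSqKernelDeriv_le {c m M t : ℝ} (hm : 0 < m) (hmc : m ≤ c) (hm1 : m ≤ 1)
    (hM : |c - 1| ≤ M) (ht : 0 ≤ t) :
    |logSqKernelDeriv c t| ≤ 2 * M / m * ((m + t) ^ 2)⁻¹ := by
  have hc : 0 < c := hm.trans_le hmc
  have hden : m * (m + t) ^ 2 ≤ c * (c + t) * (1 + t) := by
    calc m * (m + t) ^ 2 = m * ((m + t) * (m + t)) := by ring
      _ ≤ c * ((c + t) * (1 + t)) := by gcongr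
      _ = _ := by ring
  rw [logSqKernelDeriv, abs_div, abs_mul, abs_two,
    abs_of_pos (by positivity : 0 < c * (c + t) * (1 + t))]
  calc 2 * |c - 1| / (c * (c + t) * (1 + t)) ≤ 2 * M / (m * (m + t) ^ 2) := by
        gcongr
        linarith [abs_nonneg (c - 1)]
    _ = _ := by field_simp

lemma integrableOn_logSqKernelDeriv {a : ℝ} (ha : 0 < a) :
    IntegrableOn (logSqKernelDeriv a) (Ioi 0) := by
  have hm : 0 < min a 1 := lt_min ha one_pos
  refine ((integrableOn_inv_add_sq hm).const_mul (2 * |a - 1| / min a 1)).mono'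
    ((continuousOn_logSqKernelDeriv ha).aestronglyMeasurable measurableSet_Ioi) ?_
  filter_upwards [self_mem_ae_restrict measurableSet_Ioi] with t (ht : 0 < t)
  exact abs_logSqKernelDeriv_le hm (min_le_left _ _) (min_le_right _ _) le_rfl ht.le

lemma integral_logSqKernelDeriv {a : ℝ} (ha : 0 < a) :
    ∫ t in Ioi 0, logSqKernelDeriv a t = 2 * log a / a := by
  have hderiv : ∀ t ∈ Ici (0 : ℝ), HasDerivAt (fun s ↦ 2 / a * (log (1 + s) - log (a + s)))
      (logSqKernelDeriv a t) t := by
    intro t (ht : 0 ≤ t)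
    have h := ((((hasDerivAt_id t).const_add 1).log (by positivity)).sub
      (((hasDerivAt_id t).const_add a).log (by positivity))).const_mul (2 / a)
    refine h.congr_deriv ?_
    simp only [logSqKernelDeriv, id]
    field_simp
    ring
  have hratio : Tendsto (fun t ↦ 1 - (a - 1) / (a + t)) atTop (𝓝 1) := by
    simpa using tendsto_const_nhds.sub
      (tendsto_const_nhds.div_atTop (tendsto_atTop_add_const_left _ a tendsto_id))
  have hlim : Tendsto (fun s ↦ 2 / a * (log (1 + s) - log (a + s))) atTop (𝓝 0) := by
    have h := ((continuousAt_log one_ne_zero).tendsto.comp hratio).const_mul (2 / a)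
    rw [log_one, mul_zero] at h
    refine h.congr' ?_
    filter_upwards [eventually_gt_atTop 0] with t ht
    rw [Function.comp_apply, ← log_div (by positivity) (by positivity)]
    congr 2
    field_simp
    ring
  rw [integral_Ioi_of_hasDerivAt_of_tendsto' hderiv (integrableOn_logSqKernelDeriv ha) hlim]
  simp only [add_zero, log_one]
  ring

lemma abs_logSqKernel_le {a t : ℝ} (ha : 0 < a) (ht : 0 < t) :
    |logSqKernel a t| ≤ 2 * |a - 1| ^ 2 / min 1 a * ((min 1 a + t) ^ 2)⁻¹ := by
  have hm : 0 < min 1 a := lt_min one_pos ha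
  have hmem : ∀ c ∈ uIcc 1 a, min 1 a ≤ c := fun c hc ↦ by
    rcases mem_uIcc.1 hc with h | h
    exacts [min_le_of_left_le h.1, min_le_of_right_le h.1]
  have hmvt := Convex.norm_image_sub_le_of_norm_hasDerivWithin_le (f := (logSqKernel · t))
    (fun c hc ↦ (hasDerivAt_logSqKernel (hm.trans_le (hmem c hc)) ht).hasDerivWithinAt)
    (fun c hc ↦ abs_logSqKernelDeriv_le hm (hmem c hc) (min_le_left _ _)
      (abs_sub_left_of_mem_uIcc hc) ht.le)
    (convex_uIcc 1 a) left_mem_uIcc right_mem_uIcc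
  rw [logSqKernel_one, sub_zero, norm_eq_abs, norm_eq_abs] at hmvt
  exact hmvt.trans_eq (by ring)

lemma integrableOn_logSqKernel {a : ℝ} (ha : 0 < a) : IntegrableOn (logSqKernel a) (Ioi 0) :=
  ((integrableOn_inv_add_sq (lt_min one_pos ha)).const_mul _).mono'
    ((continuousOn_logSqKernel ha).aestronglyMeasurable measurableSet_Ioi)
    (by filter_upwards [self_mem_ae_restrict measurableSet_Ioi] with t ht
        exact abs_logSqKernel_le ha ht)

lemma hasDerivAt_integral_logSqKernel {b : ℝ} (hb : 0 < b) :
    HasDerivAt (fun a ↦ ∫ t in Ioi 0, logSqKernel a t) (2 * log b / b) b := by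
  have hm : 0 < min (b / 2) 1 := lt_min (half_pos hb) one_pos
  have hnhds : Ioo (b / 2) (2 * b) ∈ 𝓝 b := Ioo_mem_nhds (by linarith) (by linarith)
  have h := hasDerivAt_integral_of_dominated_loc_of_deriv_le hnhds
    ((eventually_gt_nhds hb).mono fun a ha ↦
      (continuousOn_logSqKernel ha).aestronglyMeasurable measurableSet_Ioi)
    (integrableOn_logSqKernel hb)
    ((continuousOn_logSqKernelDeriv hb).aestronglyMeasurable measurableSet_Ioi)
    (bound := fun t ↦ 2 * (2 * b + 1) / min (b / 2) 1 * ((min (b / 2) 1 + t) ^ 2)⁻¹)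
    ?_ ((integrableOn_inv_add_sq hm).const_mul _) ?_
  · rw [integral_logSqKernelDeriv hb] at h
    exact h.2
  all_goals
    filter_upwards [self_mem_ae_restrict measurableSet_Ioi] with t (ht : 0 < t) c ⟨hc₁, hc₂⟩
  · exact abs_logSqKernelDeriv_le hm ((min_le_left _ _).trans hc₁.le) (min_le_right _ _)
      (abs_le.2 ⟨by linarith, by linarith⟩) ht.le
  · exact hasDerivAt_logSqKernel (by linarith) ht

theorem integral_logSqKernel {a : ℝ} (ha : 0 < a) :
    ∫ t in Ioi 0, logSqKernel a t = log a ^ 2 := by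
  have hlog : ∀ b ∈ Ioi (0 : ℝ), HasDerivAt (fun a ↦ log a ^ 2) (2 * log b / b) b := by
    intro b (hb : 0 < b)
    refine ((hasDerivAt_log hb.ne').pow 2).congr_deriv ?_
    field_simp
    ring
  refine isOpen_Ioi.eqOn_of_deriv_eq isPreconnected_Ioi
    (fun b hb ↦ (hasDerivAt_integral_logSqKernel hb).differentiableAt.differentiableWithinAt)
    (fun b hb ↦ (hlog b hb).differentiableAt.differentiableWithinAt)
    (fun b hb ↦ by rw [(hasDerivAt_integral_logSqKernel hb).deriv, (hlog b hb).deriv])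
    (mem_Ioi.2 one_pos) (by simp [logSqKernel_one]) ha

section Comparison

variable {ι : Type*} [Fintype ι] {y f : ι → ℝ}

lemma sum_logSqKernel_sub_sum_logSqKernel (hy : ∀ i, 0 < y i) (hf : ∀ i, 0 < f i)
    (hprod : ∏ i, y i = ∏ i, f i) {t : ℝ} (ht : 0 < t) :
    ∑ i, logSqKernel (y i) t - ∑ i, logSqKernel (f i) t =
      2 / t * (log (∏ i, (y i + t)) - log (∏ i, (f i + t))) := by
  have hlog : ∑ i, log (y i) = ∑ i, log (f i) := by
    rw [← log_prod fun i _ ↦ (hy i).ne', hprod, log_prod fun i _ ↦ (hf i).ne']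
  rw [log_prod fun i _ ↦ by linarith [hy i], log_prod fun i _ ↦ by linarith [hf i]]
  simp only [logSqKernel, Finset.sum_sub_distrib, ← Finset.mul_sum, ← Finset.sum_div, hlog]
  ring

theorem prod_add_eq_of_sum_sq_log_eq (hy : ∀ i, 0 < y i) (hf : ∀ i, 0 < f i)
    (hprod : ∏ i, y i = ∏ i, f i) (hle : ∀ t, 0 < t → ∏ i, (f i + t) ≤ ∏ i, (y i + t))
    (hlog : ∑ i, log (y i) ^ 2 = ∑ i, log (f i) ^ 2) {t : ℝ} (ht : 0 < t) :
    ∏ i, (y i + t) = ∏ i, (f i + t) := by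
  have hprod_pos : ∀ {g : ι → ℝ}, (∀ i, 0 < g i) → ∀ s : ℝ, 0 < s → 0 < ∏ i, (g i + s) :=
    fun hg s hs ↦ Finset.prod_pos fun i _ ↦ add_pos (hg i) hs
  set G := fun s ↦ ∑ i, logSqKernel (y i) s - ∑ i, logSqKernel (f i) s
  have hGint : IntegrableOn G (Ioi 0) :=
    (integrable_finsetSum _ fun i _ ↦ integrableOn_logSqKernel (hy i)).sub
      (integrable_finsetSum _ fun i _ ↦ integrableOn_logSqKernel (hf i))
  have hGcont : ContinuousOn G (Ioi 0) :=
    (continuousOn_finsetSum _ fun i _ ↦ continuousOn_logSqKernel (hy i)).sub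
      (continuousOn_finsetSum _ fun i _ ↦ continuousOn_logSqKernel (hf i))
  have hGnonneg : ∀ s ∈ Ioi (0 : ℝ), 0 ≤ G s := fun s (hs : 0 < s) ↦ by
    dsimp only [G]
    rw [sum_logSqKernel_sub_sum_logSqKernel hy hf hprod hs]
    exact mul_nonneg (by positivity)
      (sub_nonneg.2 (log_le_log (hprod_pos hf s hs) (hle s hs)))
  have hGzero : ∫ s in Ioi 0, G s = 0 := by
    rw [integral_sub (integrable_finsetSum _ fun i _ ↦ integrableOn_logSqKernel (hy i))
      (integrable_finsetSum _ fun i _ ↦ integrableOn_logSqKernel (hf i)),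
      integral_finsetSum _ fun i _ ↦ integrableOn_logSqKernel (hy i),
      integral_finsetSum _ fun i _ ↦ integrableOn_logSqKernel (hf i)]
    simp only [integral_logSqKernel (hy _), integral_logSqKernel (hf _), hlog, sub_self]
  have hGae : G =ᵐ[volume.restrict (Ioi 0)] 0 :=
    (setIntegral_eq_zero_iff_of_nonneg_ae
      ((ae_restrict_iff' measurableSet_Ioi).2 (ae_of_all _ hGnonneg)) hGint).1 hGzero
  have hGt : G t = 0 :=
    Measure.eqOn_open_of_ae_eq hGae isOpen_Ioi hGcont continuousOn_const ht
  dsimp only [G] at hGt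
  rw [sum_logSqKernel_sub_sum_logSqKernel hy hf hprod ht, mul_eq_zero, sub_eq_zero] at hGt
  exact log_injOn_pos (hprod_pos hy t ht) (hprod_pos hf t ht)
    (hGt.resolve_left (by positivity))

end Comparison

lemma triple_eq_of_esymm_eq {y₁ y₂ y₃ f₁ f₂ f₃ : ℝ} (hy₁₂ : y₂ ≤ y₁) (hy₂₃ : y₃ ≤ y₂)
    (hf₁₂ : f₂ ≤ f₁) (hf₂₃ : f₃ ≤ f₂) (h₁ : y₁ + y₂ + y₃ = f₁ + f₂ + f₃)
    (h₂ : y₁ * y₂ + y₁ * y₃ + y₂ * y₃ = f₁ * f₂ + f₁ * f₃ + f₂ * f₃)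
    (h₃ : y₁ * y₂ * y₃ = f₁ * f₂ * f₃) : y₁ = f₁ ∧ y₂ = f₂ ∧ y₃ = f₃ := by
  have hcubic : ∀ z, (z - y₁) * (z - y₂) * (z - y₃) = (z - f₁) * (z - f₂) * (z - f₃) :=
    fun z ↦ by linear_combination (-z ^ 2) * h₁ + z * h₂ - h₃
  have hroot_le : ∀ {a₁ a₂ a₃ b : ℝ}, a₂ ≤ a₁ → a₃ ≤ a₂ →
      (b - a₁) * (b - a₂) * (b - a₃) = 0 → b ≤ a₁ := fun {a₁ a₂ a₃ b} h₁₂ h₂₃ h ↦ by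
    by_contra! hb
    have : 0 < (b - a₁) * (b - a₂) * (b - a₃) :=
      mul_pos (mul_pos (by linarith) (by linarith)) (by linarith)
    linarith
  obtain rfl : y₁ = f₁ := le_antisymm
    (hroot_le hf₁₂ hf₂₃ (by rw [← hcubic, sub_self, zero_mul, zero_mul]))
    (hroot_le hy₁₂ hy₂₃ (by rw [hcubic, sub_self, zero_mul, zero_mul]))
  have hsum : y₂ + y₃ = f₂ + f₃ := by linarith
  -- both squares equal the discriminant of the quadratic `(z - y₂) * (z - y₃)`
  have hgap : (y₂ - y₃) ^ 2 = (f₂ - f₃) ^ 2 := by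
    linear_combination (y₂ + y₃ + f₂ + f₃ + 4 * y₁) * hsum - 4 * h₂
  have hdiff := (pow_left_inj₀ (sub_nonneg.2 hy₂₃) (sub_nonneg.2 hf₂₃) two_ne_zero).1 hgap
  exact ⟨rfl, by linarith, by linarith⟩

theorem eq_of_sum_sq_log_eq {y₁ y₂ y₃ f₁ f₂ f₃ : ℝ}
    (hy₁₂ : y₂ ≤ y₁) (hy₂₃ : y₃ ≤ y₂) (hy₃ : 0 < y₃)
    (hf₁₂ : f₂ ≤ f₁) (hf₂₃ : f₃ ≤ f₂) (hf₃ : 0 < f₃)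
    (h₁ : f₁ + f₂ + f₃ ≤ y₁ + y₂ + y₃)
    (h₂ : 1 / f₁ + 1 / f₂ + 1 / f₃ ≤ 1 / y₁ + 1 / y₂ + 1 / y₃)
    (h₃ : y₁ * y₂ * y₃ = f₁ * f₂ * f₃)
    (hlog : log y₁ ^ 2 + log y₂ ^ 2 + log y₃ ^ 2 = log f₁ ^ 2 + log f₂ ^ 2 + log f₃ ^ 2) :
    y₁ = f₁ ∧ y₂ = f₂ ∧ y₃ = f₃ := by
  have hy₂ := hy₃.trans_le hy₂₃
  have hy₁ := hy₂.trans_le hy₁₂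
  have hf₂ := hf₃.trans_le hf₂₃
  have hf₁ := hf₂.trans_le hf₁₂
  have h₂' : f₁ * f₂ + f₁ * f₃ + f₂ * f₃ ≤ y₁ * y₂ + y₁ * y₃ + y₂ * y₃ := by
    have hy : 1 / y₁ + 1 / y₂ + 1 / y₃ = (y₁ * y₂ + y₁ * y₃ + y₂ * y₃) / (y₁ * y₂ * y₃) := by
      field_simp; ring
    have hf : 1 / f₁ + 1 / f₂ + 1 / f₃ = (f₁ * f₂ + f₁ * f₃ + f₂ * f₃) / (f₁ * f₂ * f₃) := by
      field_simp; ring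
    rw [hy, hf, h₃] at h₂
    exact (div_le_div_iff_of_pos_right (by positivity)).1 h₂
  have hone := prod_add_eq_of_sum_sq_log_eq (y := ![y₁, y₂, y₃]) (f := ![f₁, f₂, f₃])
    (fun i ↦ by fin_cases i <;> assumption) (fun i ↦ by fin_cases i <;> assumption)
    (by simpa [Fin.prod_univ_three] using h₃)
    (fun t ht ↦ by
      simp only [Fin.prod_univ_three, Matrix.cons_val]
      nlinarith [mul_nonneg (sub_nonneg.2 h₁) (sq_nonneg t),
        mul_nonneg (sub_nonneg.2 h₂') ht.le])
    (by simpa [Fin.sum_univ_three] using hlog) one_pos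
  simp only [Fin.prod_univ_three, Matrix.cons_val] at hone
  have hgap : (y₁ + y₂ + y₃ - (f₁ + f₂ + f₃)) +
      (y₁ * y₂ + y₁ * y₃ + y₂ * y₃ - (f₁ * f₂ + f₁ * f₃ + f₂ * f₃)) = 0 := by
    linear_combination hone - h₃
  exact triple_eq_of_esymm_eq hy₁₂ hy₂₃ hf₁₂ hf₂₃ (by linarith) (by linarith) h₃

/-- Equality case in the three-dimensional sum of squared logarithms inequality:
for decreasingly ordered positive reals satisfying the three conditions, equality of the
sums of squared logarithms holds iff the ordered triples coincide. -/
theorem sum_sq_log_eq_iff (x₁ x₂ x₃ d₁ d₂ d₃ : ℝ)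
    (hx12 : x₁ ≥ x₂) (hx23 : x₂ ≥ x₃) (hx3 : x₃ > 0)
    (hd12 : d₁ ≥ d₂) (hd23 : d₂ ≥ d₃) (hd3 : d₃ > 0)
    (h1 : x₁ ^ 2 + x₂ ^ 2 + x₃ ^ 2 ≥ d₁ ^ 2 + d₂ ^ 2 + d₃ ^ 2)
    (h2 : 1 / x₁ ^ 2 + 1 / x₂ ^ 2 + 1 / x₃ ^ 2 ≥ 1 / d₁ ^ 2 + 1 / d₂ ^ 2 + 1 / d₃ ^ 2)
    (h3 : x₁ * x₂ * x₃ = d₁ * d₂ * d₃) :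
    (Real.log x₁) ^ 2 + (Real.log x₂) ^ 2 + (Real.log x₃) ^ 2 =
      (Real.log d₁) ^ 2 + (Real.log d₂) ^ 2 + (Real.log d₃) ^ 2 ↔
    (x₁ = d₁ ∧ x₂ = d₂ ∧ x₃ = d₃) := by
  refine ⟨fun hlog ↦ ?_, fun ⟨rfl, rfl, rfl⟩ ↦ rfl⟩
  have hx₂ := hx3.trans_le hx23
  have hd₂ := hd3.trans_le hd23
  have hsq := eq_of_sum_sq_log_eq (pow_le_pow_left₀ hx₂.le hx12 2)
    (pow_le_pow_left₀ hx3.le hx23 2) (by positivity) (pow_le_pow_left₀ hd₂.le hd12 2)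
    (pow_le_pow_left₀ hd3.le hd23 2) (by positivity) h1 h2
    (by simp only [← mul_pow, h3])
    (by simp only [log_pow]; linear_combination 4 * hlog)
  have hsqrt {x d : ℝ} (hx : 0 < x) (hd : 0 < d) (h : x ^ 2 = d ^ 2) : x = d :=
    (pow_left_inj₀ hx.le hd.le two_ne_zero).1 h
  exact ⟨hsqrt (hx₂.trans_le hx12) (hd₂.trans_le hd12) hsq.1, hsqrt hx₂ hd₂ hsq.2.1,
    hsqrt hx3 hd3 hsq.2.2⟩
end

section
/- For every complex n×n matrix X, the spectral (operator 2-) norm satisfies ‖exp X‖₂ ≤ ‖exp(sym X)‖₂, where sym X = (X + X*)/2. -/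
/-!
Write `A = (T + T*)/2` for the Hermitian part of `T = toEuclideanCLM X`, and `μ` for the largest
eigenvalue of `A`. Since `Re ⟪T x, x⟫ = ⟪A x, x⟫ ≤ μ ‖x‖²`, the function `t ↦ ‖exp (t T) x‖²`
satisfies `f' ≤ 2μ f`, so Grönwall gives `‖exp T‖ ≤ exp μ`. On the other hand `exp μ` lies in the
spectrum of `exp A`, so `exp μ ≤ ‖exp A‖`.
-/

open Matrix

/-- Spectral norm (largest singular value) of a complex matrix. -/
noncomputable def specNorm {n : ℕ} (X : Matrix (Fin n) (Fin n) ℂ) : ℝ :=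
  ‖Matrix.toEuclideanCLM (𝕜 := ℂ) X‖

open NormedSpace RCLike

theorem spectrum.real_exp_le_norm_exp {𝕜 𝔸 : Type*} [RCLike 𝕜] [NormedRing 𝔸] [NormedAlgebra 𝕜 𝔸]
    [CompleteSpace 𝔸] [NormOneClass 𝔸] {a : 𝔸} {μ : ℝ} (hμ : (μ : 𝕜) ∈ spectrum 𝕜 a) :
    Real.exp μ ≤ ‖exp a‖ := by
  have := spectrum.norm_le_norm_of_mem (spectrum.exp_mem_exp a hμ)
  rwa [← map_exp (algebraMap ℝ 𝕜) (continuous_algebraMap ℝ 𝕜), ← Real.exp_eq_exp_ℝ,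
    algebraMap_eq_ofReal, norm_ofReal, abs_of_pos (Real.exp_pos μ)] at this

section RCLike

variable {𝕜 E : Type*} [RCLike 𝕜] [NormedAddCommGroup E] [InnerProductSpace 𝕜 E] [CompleteSpace E]

local notation "⟪" x ", " y "⟫" => inner 𝕜 x y

namespace ContinuousLinearMap

theorem re_inner_half_smul_add_star_apply_self (T : E →L[𝕜] E) (x : E) :
    re ⟪((1 / 2 : 𝕜) • (T + star T)) x, x⟫ = re ⟪T x, x⟫ := by
  have hstar : re ⟪star T x, x⟫ = re ⟪T x, x⟫ := by
    rw [star_eq_adjoint, adjoint_inner_left, inner_re_symm]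
  simp [inner_smul_left, inner_add_left, hstar, ← two_mul, normSq_apply]

theorem isSelfAdjoint_half_smul_add_star (T : E →L[𝕜] E) :
    IsSelfAdjoint ((1 / 2 : 𝕜) • (T + star T)) :=
  IsSelfAdjoint.smul (by simp [IsSelfAdjoint]) (.add_star_self T)

end ContinuousLinearMap

theorem IsSelfAdjoint.exists_mem_spectrum_forall_re_inner_le [FiniteDimensional 𝕜 E]
    [Nontrivial E] {A : E →L[𝕜] E} (hA : IsSelfAdjoint A) :
    ∃ μ : ℝ, (μ : 𝕜) ∈ spectrum 𝕜 A ∧ ∀ x, re ⟪A x, x⟫ ≤ μ * ‖x‖ ^ 2 := by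
  have hμ := (ContinuousLinearMap.isSelfAdjoint_iff_isSymmetric.mp hA)
    |>.hasEigenvalue_iSup_of_finiteDimensional
  refine ⟨_, ContinuousLinearMap.spectrum_eq (f := A) ▸ hμ.mem_spectrum, fun x => ?_⟩
  rcases eq_or_ne x 0 with rfl | hx
  · simp
  have hbdd : BddAbove (Set.range fun y : {y : E // y ≠ 0} => re ⟪A y, y⟫ / ‖(y : E)‖ ^ 2) := by
    refine ⟨‖A‖, ?_⟩
    rintro _ ⟨y, rfl⟩
    exact (le_abs_self _).trans (A.rayleighQuotient_le_norm y)
  have := le_ciSup hbdd ⟨x, hx⟩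
  rwa [div_le_iff₀ (by positivity)] at this

end RCLike

namespace ContinuousLinearMap

variable {E : Type*} [NormedAddCommGroup E] [InnerProductSpace ℂ E] [CompleteSpace E]

local notation "⟪" x ", " y "⟫" => inner ℂ x y

theorem hasDerivAt_exp_smul_apply (T : E →L[ℂ] E) (x : E) (t : ℝ) :
    HasDerivAt (fun s : ℝ => exp (s • T) x) (T (exp (t • T) x)) t :=
  ((apply ℂ E x).restrictScalars ℝ).hasFDerivAt.comp_hasDerivAt t
    (hasDerivAt_exp_smul_const' T t)

theorem hasDerivAt_norm_exp_smul_apply_sq (T : E →L[ℂ] E) (x : E) (t : ℝ) :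
    HasDerivAt (fun s : ℝ => ‖exp (s • T) x‖ ^ 2)
      (2 * re ⟪T (exp (t • T) x), exp (t • T) x⟫) t := by
  have hu := hasDerivAt_exp_smul_apply T x t
  have h := reCLM.hasFDerivAt.comp_hasDerivAt t (hu.inner ℂ hu)
  simp only [Function.comp_def, reCLM_apply, inner_self_eq_norm_sq, map_add] at h
  rwa [inner_re_symm (𝕜 := ℂ) (exp (t • T) x), ← two_mul] at h

theorem norm_exp_apply_le_of_re_inner_le (T : E →L[ℂ] E) {μ : ℝ}
    (hT : ∀ x, re ⟪T x, x⟫ ≤ μ * ‖x‖ ^ 2) (x : E) : ‖exp T x‖ ≤ Real.exp μ * ‖x‖ := by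
  have hderiv := hasDerivAt_norm_exp_smul_apply_sq T x
  have hgronwall := le_gronwallBound_of_liminf_deriv_right_le (δ := ‖x‖ ^ 2) (K := 2 * μ)
    (ε := 0) (a := 0) (b := 1)
    (fun s _ => (hderiv s).continuousAt.continuousWithinAt)
    (fun s _ r hr => (hderiv s).hasDerivWithinAt.liminf_right_slope_le hr) (by simp)
    (fun s _ => by simpa [mul_assoc] using mul_le_mul_of_nonneg_left (hT _) two_pos.le) 1 (by simp)
  have hsq : ‖exp T x‖ ^ 2 ≤ (Real.exp μ * ‖x‖) ^ 2 := by
    rw [gronwallBound_ε0, sub_zero, mul_one, mul_comm] at hgronwall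
    rw [mul_pow, ← Real.exp_nat_mul, Nat.cast_ofNat]
    simpa using hgronwall
  exact (pow_le_pow_iff_left₀ (norm_nonneg _) (by positivity) two_ne_zero).mp hsq

theorem norm_exp_le_of_re_inner_le (T : E →L[ℂ] E) {μ : ℝ}
    (hT : ∀ x, re ⟪T x, x⟫ ≤ μ * ‖x‖ ^ 2) : ‖exp T‖ ≤ Real.exp μ :=
  opNorm_le_bound _ (Real.exp_nonneg μ) (norm_exp_apply_le_of_re_inner_le T hT)

theorem norm_exp_le_norm_exp_half_smul_add_star [FiniteDimensional ℂ E] (T : E →L[ℂ] E) :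
    ‖exp T‖ ≤ ‖exp ((1 / 2 : ℂ) • (T + star T))‖ := by
  rcases subsingleton_or_nontrivial E with hE | hE
  · exact le_of_eq (congrArg _ (Subsingleton.elim _ _))
  obtain ⟨μ, hμ_mem, hμ_le⟩ :=
    (isSelfAdjoint_half_smul_add_star T).exists_mem_spectrum_forall_re_inner_le
  calc ‖exp T‖ ≤ Real.exp μ :=
        norm_exp_le_of_re_inner_le T fun x => re_inner_half_smul_add_star_apply_self T x ▸ hμ_le x
    _ ≤ ‖exp ((1 / 2 : ℂ) • (T + star T))‖ := spectrum.real_exp_le_norm_exp hμ_mem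

end ContinuousLinearMap

open scoped Matrix.Norms.L2Operator in
theorem Matrix.toEuclideanCLM_exp {𝕜 n : Type*} [RCLike 𝕜] [Fintype n] [DecidableEq n]
    (A : Matrix n n 𝕜) : toEuclideanCLM (𝕜 := 𝕜) (exp A) = exp (toEuclideanCLM (𝕜 := 𝕜) A) := by
  let +nondep : NormedAlgebra ℚ (Matrix n n 𝕜) := .restrictScalars ℚ 𝕜 _
  have hiso : Isometry (toEuclideanCLM (𝕜 := 𝕜) (n := n)) :=
    AddMonoidHomClass.isometry_of_norm _ fun _ => (cstar_norm_def _).symm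
  exact map_exp _ hiso.continuous A

/-- `‖exp X‖₂ ≤ ‖exp (sym X)‖₂` for the spectral norm. -/
theorem specNorm_exp_le_exp_sym {n : ℕ} (X : Matrix (Fin n) (Fin n) ℂ) :
    specNorm (NormedSpace.exp X) ≤ specNorm (NormedSpace.exp ((1 / 2 : ℂ) • (X + Xᴴ))) := by
  have hsym : toEuclideanCLM (𝕜 := ℂ) ((1 / 2 : ℂ) • (X + Xᴴ))
      = (1 / 2 : ℂ) • (toEuclideanCLM (𝕜 := ℂ) X + star (toEuclideanCLM (𝕜 := ℂ) X)) := by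
    rw [map_smul, map_add, ← star_eq_conjTranspose, map_star]
  rw [specNorm, specNorm, toEuclideanCLM_exp, toEuclideanCLM_exp, hsym]
  exact (toEuclideanCLM (𝕜 := ℂ) X).norm_exp_le_norm_exp_half_smul_add_star
end

section
/- Let Z ∈ ℂ³ˣ³ be nonsingular with polar decomposition Z = U_p H. Then in the Frobenius norm, min over Q ∈ U(3) and all logarithms X with exp X = Q* Z of ‖X‖_F² equals ‖log H‖_F², attained at Q = U_p with X = log H the principal logarithm. -/
/-!
Let `E = exp X = Qᴴ Z`. Then `Eᴴ E = Zᴴ Z = H² = exp L * exp L`, so on the unit eigenvector `b_j`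
of `L` we get `‖E b_j‖² = exp (2 ℓ_j)`. On the other hand, the derivative of `‖exp (t X) v‖²` is
governed by the quadratic form of `X + Xᴴ`, and Gronwall's inequality squeezes `‖E v‖²` between
`exp τ_min ‖v‖²` and `exp τ_max ‖v‖²`, where `τ` are the eigenvalues of `X + Xᴴ`. Hence every
`2 ℓ_j` lies in `[τ_min, τ_max]`. Taking determinants, `det E = exp (tr X)` gives
`∑ 2 ℓ_j = 2 Re (tr X) = ∑ τ_k`. For three numbers these two facts force
`∑ (2 ℓ_j)² ≤ ∑ τ_k² = ‖X + Xᴴ‖_F² ≤ 4 ‖X‖_F²`, i.e. `‖L‖_F² ≤ ‖X‖_F²`.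
-/

open Matrix
open scoped ComplexOrder

/-- Squared Frobenius norm. -/
noncomputable def frobSq (X : Matrix (Fin 3) (Fin 3) ℂ) : ℝ :=
  ∑ i, ∑ j, ‖X i j‖ ^ 2

open NormedSpace RCLike
open scoped InnerProductSpace

theorem star_mul_self_unitary_mul {R : Type*} [Monoid R] [StarMul R] {U : R}
    (hU : U ∈ unitary R) (a : R) : star (U * a) * (U * a) = star a * a := by
  rw [star_mul, mul_assoc, ← mul_assoc (star U), Unitary.star_mul_self_of_mem hU, one_mul]

section LogarithmicNorm

variable {E : Type*} [NormedAddCommGroup E] [InnerProductSpace ℂ E] [CompleteSpace E]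

theorem ContinuousLinearMap.hasDerivAt_exp_smul_apply_s14 (A : E →L[ℂ] E) (v : E) (t : ℝ) :
    HasDerivAt (fun s : ℝ => exp (s • A) v) (A (exp (t • A) v)) t :=
  ((apply ℂ E v).restrictScalars ℝ).hasFDerivAt.comp_hasDerivAt t
    (hasDerivAt_exp_smul_const' (𝕂 := ℝ) A t)

/-- Gronwall's inequality for `t ↦ ‖exp (t • A) v‖²`, whose logarithmic derivative is at most
`2 * c`. -/
theorem ContinuousLinearMap.norm_exp_apply_sq_le {A : E →L[ℂ] E} {c : ℝ}
    (hA : ∀ w, re ⟪A w, w⟫_ℂ ≤ c * ‖w‖ ^ 2) (v : E) :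
    ‖exp A v‖ ^ 2 ≤ Real.exp (2 * c) * ‖v‖ ^ 2 := by
  let _ := InnerProductSpace.rclikeToReal ℂ E
  set u := fun s : ℝ => exp (s • A) v
  set ψ := fun s : ℝ => Real.exp (-(2 * c) * s) * ‖u s‖ ^ 2
  have hψ : ∀ t, HasDerivAt ψ
      (Real.exp (-(2 * c) * t) * (2 * re ⟪A (u t), u t⟫_ℂ - 2 * c * ‖u t‖ ^ 2)) t := fun t => by
    refine ((((hasDerivAt_id t).const_mul (-(2 * c))).exp).mul
      (A.hasDerivAt_exp_smul_apply_s14 v t).norm_sq).congr_deriv ?_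
    rw [real_inner_comm, real_inner_eq_re_inner ℂ]
    simp only [id, mul_one]
    ring
  have hanti : Antitone ψ := by
    refine antitone_of_deriv_nonpos (fun t => (hψ t).differentiableAt) fun t => ?_
    rw [(hψ t).deriv]
    exact mul_nonpos_of_nonneg_of_nonpos (Real.exp_pos _).le (by linarith [hA (u t)])
  have h10 : ψ 1 ≤ ψ 0 := hanti zero_le_one
  simp only [ψ, u, one_smul, zero_smul, exp_zero, mul_one, mul_zero, Real.exp_zero, one_mul,
    one_apply_eq_self] at h10
  calc ‖exp A v‖ ^ 2 = Real.exp (2 * c) * (Real.exp (-(2 * c)) * ‖exp A v‖ ^ 2) := by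
        rw [← mul_assoc, ← Real.exp_add, add_neg_cancel, Real.exp_zero, one_mul]
    _ ≤ Real.exp (2 * c) * ‖v‖ ^ 2 := by gcongr

theorem ContinuousLinearMap.exp_mul_norm_sq_le_norm_exp_apply_sq {A : E →L[ℂ] E} {c : ℝ}
    (hA : ∀ w, c * ‖w‖ ^ 2 ≤ re ⟪A w, w⟫_ℂ) (v : E) :
    Real.exp (2 * c) * ‖v‖ ^ 2 ≤ ‖exp A v‖ ^ 2 := by
  have hneg : ∀ w, re ⟪(-A) w, w⟫_ℂ ≤ -c * ‖w‖ ^ 2 := fun w => by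
    rw [_root_.neg_apply, inner_neg_left, map_neg]
    linarith [hA w]
  have h := norm_exp_apply_sq_le hneg (exp A v)
  let _ : NormedAlgebra ℚ (E →L[ℂ] E) := NormedAlgebra.restrictScalars ℚ ℂ _
  rw [← comp_apply, ← mul_def, ← exp_add_of_commute (Commute.neg_left (Commute.refl A)),
    neg_add_cancel, exp_zero, one_apply_eq_self] at h
  calc Real.exp (2 * c) * ‖v‖ ^ 2
      ≤ Real.exp (2 * c) * (Real.exp (2 * -c) * ‖exp A v‖ ^ 2) := by gcongr
    _ = ‖exp A v‖ ^ 2 := by rw [← mul_assoc, ← Real.exp_add]; simp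

end LogarithmicNorm

namespace Matrix

variable {n : Type*} [Fintype n] [DecidableEq n]

theorem det_updateRow_one {R : Type*} [CommRing R] (r : n → R) (i : n) :
    det (updateRow (1 : Matrix n n R) i r) = r i := by
  rw [← det_transpose, ← updateCol_transpose, transpose_one, ← cramer_apply, cramer_one]
  rfl

open scoped Matrix.Norms.Operator in
/-- The derivative is taken in `n → n → ℂ`, where `det` is a continuous multilinear map of the
rows. -/
theorem hasDerivAt_exp_smul (X : Matrix n n ℂ) (t : ℝ) :
    HasDerivAt (fun s : ℝ => ((exp (s • X) : Matrix n n ℂ) : n → n → ℂ))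
      (X * exp (t • X) : Matrix n n ℂ) t :=
  (LinearMap.id : Matrix n n ℂ →ₗ[ℝ] Matrix n n ℂ).toContinuousLinearMap.hasFDerivAt.comp_hasDerivAt
    t (hasDerivAt_exp_smul_const' X t)

/-- Jacobi's formula at the identity: `det` is multilinear in the rows, so its derivative at `1`
in the direction `X` is `∑ i, det (updateRow 1 i (X i)) = trace X`. -/
theorem hasDerivAt_det_exp_smul_zero (X : Matrix n n ℂ) :
    HasDerivAt (fun t : ℝ => det (exp (t • X))) (trace X) 0 := by
  let detML : ContinuousMultilinearMap ℂ (fun _ : n => n → ℂ) ℂ :=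
    { toMultilinearMap := (detRowAlternating : (n → ℂ) [⋀^n]→ₗ[ℂ] ℂ).toMultilinearMap
      cont := continuous_id.matrix_det }
  refine (((detML.hasFDerivAt (1 : Matrix n n ℂ)).restrictScalars ℝ).comp_hasDerivAt_of_eq 0
    (hasDerivAt_exp_smul X 0) (by rw [zero_smul, exp_zero])).congr_deriv ?_
  rw [zero_smul, exp_zero, mul_one, ContinuousLinearMap.coe_restrictScalars']
  refine (ContinuousMultilinearMap.linearDeriv_apply _ _ _).trans ?_
  exact Finset.sum_congr rfl fun i _ => det_updateRow_one (X i) i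

theorem det_exp (X : Matrix n n ℂ) : det (exp X) = Complex.exp (trace X) := by
  set g := fun t : ℝ => det (exp (t • X))
  have hg : ∀ t, HasDerivAt g (g t * trace X) t := fun t => by
    have hshift : ∀ s, g s = g t * g (s - t) := fun s => by
      simp only [g]
      rw [← det_mul, ← exp_add_of_commute _ _ (((Commute.refl X).smul_left _).smul_right _),
        ← add_smul, add_sub_cancel]
    have h0 := HasDerivAt.comp_sub_const t t
      (by rw [sub_self]; exact hasDerivAt_det_exp_smul_zero X)
    exact (h0.const_mul (g t)).congr_of_eventuallyEq (.of_forall hshift)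
  have hconst : ∀ t, HasDerivAt (fun t : ℝ => g t * Complex.exp (-(t * trace X))) 0 t :=
    fun t => by
      have hlin : HasDerivAt (fun t : ℝ => -(t * trace X)) (-trace X) t := by
        simpa using ((hasDerivAt_id t).ofReal_comp.mul_const (trace X)).fun_neg
      refine ((hg t).mul hlin.cexp).congr_deriv ?_
      ring
  have h10 := is_const_of_deriv_eq_zero (fun t => (hconst t).differentiableAt)
    (fun t => (hconst t).deriv) 1 0
  simp only [g, one_smul, zero_smul, exp_zero, det_one, Complex.ofReal_one, one_mul,
    Complex.ofReal_zero, zero_mul, neg_zero, Complex.exp_zero, mul_one] at h10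
  rw [← mul_right_inj' (Complex.exp_ne_zero (-trace X)), mul_comm, h10, ← Complex.exp_add,
    neg_add_cancel, Complex.exp_zero]

theorem toEuclideanCLM_exp_s14 (X : Matrix n n ℂ) :
    toEuclideanCLM (𝕜 := ℂ) (exp X) = exp (toEuclideanCLM (𝕜 := ℂ) X) := by
  open scoped Matrix.Norms.Operator in
  exact map_exp (toEuclideanCLM (𝕜 := ℂ) (n := n)) (LinearMap.continuous_of_finiteDimensional
    (toEuclideanCLM (𝕜 := ℂ) (n := n)).toAlgEquiv.toLinearMap) X

theorem re_inner_toEuclideanCLM_add_conjTranspose (X : Matrix n n ℂ) (w : EuclideanSpace ℂ n) :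
    re ⟪toEuclideanCLM (𝕜 := ℂ) (X + Xᴴ) w, w⟫_ℂ =
      2 * re ⟪toEuclideanCLM (𝕜 := ℂ) X w, w⟫_ℂ := by
  rw [map_add, ← star_eq_conjTranspose, map_star, _root_.add_apply, inner_add_left,
    map_add, ContinuousLinearMap.star_eq_adjoint, ContinuousLinearMap.adjoint_inner_left,
    inner_re_symm w, two_mul]

theorem norm_toEuclideanCLM_apply_sq (M : Matrix n n ℂ) (v : EuclideanSpace ℂ n) :
    ‖toEuclideanCLM (𝕜 := ℂ) M v‖ ^ 2 = re ⟪toEuclideanCLM (𝕜 := ℂ) (Mᴴ * M) v, v⟫_ℂ := by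
  rw [← star_eq_conjTranspose, map_mul, map_star, ContinuousLinearMap.star_eq_adjoint,
    ContinuousLinearMap.mul_def, ContinuousLinearMap.comp_apply,
    ContinuousLinearMap.adjoint_inner_left, inner_re_symm, ← norm_sq_eq_re_inner (𝕜 := ℂ)]

omit [DecidableEq n] in
theorem sum_norm_sq_add_conjTranspose_le {𝕜 : Type*} [RCLike 𝕜] (X : Matrix n n 𝕜) :
    ∑ i, ∑ j, ‖(X + Xᴴ) i j‖ ^ 2 ≤ 4 * ∑ i, ∑ j, ‖X i j‖ ^ 2 := by
  have hentry : ∀ i j, ‖(X + Xᴴ) i j‖ ^ 2 ≤ 2 * ‖X i j‖ ^ 2 + 2 * ‖X j i‖ ^ 2 := fun i j => by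
    rw [add_apply, conjTranspose_apply, ← norm_star (X j i)]
    nlinarith [norm_add_le (X i j) (star (X j i)), norm_nonneg (X i j + star (X j i)),
      sq_nonneg (‖X i j‖ - ‖star (X j i)‖)]
  calc ∑ i, ∑ j, ‖(X + Xᴴ) i j‖ ^ 2
      ≤ ∑ i, ∑ j, (2 * ‖X i j‖ ^ 2 + 2 * ‖X j i‖ ^ 2) := by
        gcongr with i _ j _
        exact hentry i j
    _ = 4 * ∑ i, ∑ j, ‖X i j‖ ^ 2 := by
      simp only [Finset.sum_add_distrib, ← Finset.mul_sum]
      rw [Finset.sum_comm (f := fun i j => ‖X j i‖ ^ 2)]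
      ring

namespace IsHermitian

variable {𝕜 : Type*} [RCLike 𝕜] {A : Matrix n n 𝕜}

theorem toEuclideanCLM_eigenvectorBasis (hA : A.IsHermitian) (j : n) :
    toEuclideanCLM (𝕜 := 𝕜) A (hA.eigenvectorBasis j) =
      (hA.eigenvalues j : 𝕜) • hA.eigenvectorBasis j := by
  ext1
  simp only [ofLp_toEuclideanCLM, mulVec_eigenvectorBasis, WithLp.ofLp_smul,
    RCLike.real_smul_eq_coe_smul (K := 𝕜)]

theorem re_inner_toEuclideanCLM_self_eq_sum (hA : A.IsHermitian) (w : EuclideanSpace 𝕜 n) :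
    re ⟪toEuclideanCLM (𝕜 := 𝕜) A w, w⟫_𝕜 =
      ∑ i, hA.eigenvalues i * ‖⟪hA.eigenvectorBasis i, w⟫_𝕜‖ ^ 2 := by
  have hsym := isSymmetric_toEuclideanLin_iff.mpr hA
  rw [← hA.eigenvectorBasis.sum_inner_mul_inner, map_sum]
  refine Finset.sum_congr rfl fun i _ => ?_
  rw [show ⟪toEuclideanCLM (𝕜 := 𝕜) A w, hA.eigenvectorBasis i⟫_𝕜
      = ⟪w, toEuclideanCLM (𝕜 := 𝕜) A (hA.eigenvectorBasis i)⟫_𝕜 from hsym _ _,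
    toEuclideanCLM_eigenvectorBasis, inner_smul_right, ← inner_conj_symm, mul_assoc,
    RCLike.conj_mul, ← ofReal_pow, ← ofReal_mul, ofReal_re]

theorem re_inner_toEuclideanCLM_self_le (hA : A.IsHermitian) {c : ℝ}
    (hc : ∀ i, hA.eigenvalues i ≤ c) (w : EuclideanSpace 𝕜 n) :
    re ⟪toEuclideanCLM (𝕜 := 𝕜) A w, w⟫_𝕜 ≤ c * ‖w‖ ^ 2 := by
  rw [hA.re_inner_toEuclideanCLM_self_eq_sum, ← hA.eigenvectorBasis.sum_sq_norm_inner_right,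
    Finset.mul_sum]
  gcongr with i
  exact hc i

theorem le_re_inner_toEuclideanCLM_self (hA : A.IsHermitian) {c : ℝ}
    (hc : ∀ i, c ≤ hA.eigenvalues i) (w : EuclideanSpace 𝕜 n) :
    c * ‖w‖ ^ 2 ≤ re ⟪toEuclideanCLM (𝕜 := 𝕜) A w, w⟫_𝕜 := by
  rw [hA.re_inner_toEuclideanCLM_self_eq_sum, ← hA.eigenvectorBasis.sum_sq_norm_inner_right,
    Finset.mul_sum]
  gcongr with i
  exact hc i

theorem sum_norm_sq_eq_sum_eigenvalues_sq (hA : A.IsHermitian) :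
    ∑ i, ∑ j, ‖A i j‖ ^ 2 = ∑ i, hA.eigenvalues i ^ 2 := by
  have hD : trace (A * A) = ∑ i, (hA.eigenvalues i : 𝕜) ^ 2 := by
    conv_lhs => rw [hA.spectral_theorem, ← map_mul, Unitary.conjStarAlgAut_apply,
      trace_mul_cycle, Unitary.coe_star_mul_self, one_mul, diagonal_mul_diagonal,
      trace_diagonal]
    simp [sq]
  have htr : re (trace (A * A)) = ∑ i, ∑ j, ‖A i j‖ ^ 2 := by
    nth_rw 1 [← hA.eq]
    simp only [trace, diag, mul_apply, conjTranspose_apply, map_sum, RCLike.star_def,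
      RCLike.conj_mul, ← ofReal_pow, ofReal_re]
    exact Finset.sum_comm
  rw [← htr, hD, map_sum]
  simp only [← ofReal_pow, ofReal_re]

theorem exp_mulVec_eigenvectorBasis {A : Matrix n n ℂ} (hA : A.IsHermitian) (j : n) :
    NormedSpace.exp A *ᵥ ⇑(hA.eigenvectorBasis j) =
      (Real.exp (hA.eigenvalues j) : ℂ) • ⇑(hA.eigenvectorBasis j) := by
  set U : Matrix n n ℂ := (hA.eigenvectorUnitary : Matrix n n ℂ)
  have hinv : U⁻¹ = star U := inv_eq_left_inv (Unitary.coe_star_mul_self _)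
  have hexp : NormedSpace.exp A =
      U * diagonal (fun i => (Real.exp (hA.eigenvalues i) : ℂ)) * star U := by
    conv_lhs => rw [hA.spectral_theorem, Unitary.conjStarAlgAut_apply, ← hinv,
      Matrix.exp_conj _ _ Unitary.isUnit_coe, exp_diagonal, hinv]
    congr 3
    ext i
    simp [Complex.ofReal_exp, Complex.exp_eq_exp_ℂ]
  rw [hexp, ← mulVec_mulVec, ← mulVec_mulVec, star_eigenvectorUnitary_mulVec,
    diagonal_mulVec_single, mul_one]
  ext i
  simp [U, mulVec_single, mul_comm]

theorem toEuclideanCLM_exp_eigenvectorBasis {A : Matrix n n ℂ} (hA : A.IsHermitian) (j : n) :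
    toEuclideanCLM (𝕜 := ℂ) (NormedSpace.exp A) (hA.eigenvectorBasis j) =
      (Real.exp (hA.eigenvalues j) : ℂ) • hA.eigenvectorBasis j := by
  ext1
  simp only [ofLp_toEuclideanCLM, exp_mulVec_eigenvectorBasis, WithLp.ofLp_smul]

end IsHermitian

theorem exists_le_and_exists_ge_of_norm_exp_apply_sq (X : Matrix n n ℂ)
    (hT : (X + Xᴴ).IsHermitian) {v : EuclideanSpace ℂ n} (hv : v ≠ 0) {μ : ℝ}
    (h : ‖toEuclideanCLM (𝕜 := ℂ) (exp X) v‖ ^ 2 = Real.exp μ * ‖v‖ ^ 2) :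
    (∃ k, hT.eigenvalues k ≤ μ) ∧ ∃ k, μ ≤ hT.eigenvalues k := by
  have : Nonempty n := by
    by_contra hn
    rw [not_nonempty_iff] at hn
    exact hv (Subsingleton.elim _ _)
  have hv2 : 0 < ‖v‖ ^ 2 := by positivity
  rw [toEuclideanCLM_exp_s14] at h
  obtain ⟨kmin, hkmin⟩ := Finite.exists_min hT.eigenvalues
  obtain ⟨kmax, hkmax⟩ := Finite.exists_max hT.eigenvalues
  refine ⟨⟨kmin, ?_⟩, ⟨kmax, ?_⟩⟩
  · have hlow := ContinuousLinearMap.exp_mul_norm_sq_le_norm_exp_apply_sq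
      (A := toEuclideanCLM (𝕜 := ℂ) X) (c := hT.eigenvalues kmin / 2) (fun w => by
        have := hT.le_re_inner_toEuclideanCLM_self hkmin w
        rw [re_inner_toEuclideanCLM_add_conjTranspose] at this
        linarith) v
    rw [h, mul_div_cancel₀ _ two_ne_zero] at hlow
    exact Real.exp_le_exp.mp (le_of_mul_le_mul_right hlow hv2)
  · have hupp := ContinuousLinearMap.norm_exp_apply_sq_le
      (A := toEuclideanCLM (𝕜 := ℂ) X) (c := hT.eigenvalues kmax / 2) (fun w => by
        have := hT.re_inner_toEuclideanCLM_self_le hkmax w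
        rw [re_inner_toEuclideanCLM_add_conjTranspose] at this
        linarith) v
    rw [h, mul_div_cancel₀ _ two_ne_zero] at hupp
    exact Real.exp_le_exp.mp (le_of_mul_le_mul_right hupp hv2)

theorem sum_eigenvalues_add_conjTranspose (X : Matrix n n ℂ) (hT : (X + Xᴴ).IsHermitian) :
    ∑ k, hT.eigenvalues k = 2 * re (trace X) := by
  have h := congrArg re hT.trace_eq_sum_eigenvalues
  rw [trace_add, trace_conjTranspose, map_add, RCLike.star_def, conj_re, map_sum] at h
  simp only [ofReal_re] at h
  linarith

theorem re_trace_eq_sum_eigenvalues_of_conjTranspose_exp_mul_exp {X L : Matrix n n ℂ}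
    (hL : L.IsHermitian) (h : (exp X)ᴴ * exp X = exp L * exp L) :
    re (trace X) = ∑ j, hL.eigenvalues j := by
  have hdet := congrArg (fun M => ‖det M‖) h
  simp only [det_mul, det_conjTranspose, det_exp, norm_mul, norm_star, Complex.norm_exp,
    hL.trace_eq_sum_eigenvalues, ← Real.exp_add, Real.exp_eq_exp] at hdet
  simp only [← RCLike.re_to_complex, map_sum, RCLike.ofReal_re] at hdet
  linarith

theorem exists_le_and_exists_ge_two_mul_eigenvalues {X L : Matrix n n ℂ} (hL : L.IsHermitian)
    (hT : (X + Xᴴ).IsHermitian) (h : (exp X)ᴴ * exp X = exp L * exp L) (j : n) :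
    (∃ k, hT.eigenvalues k ≤ 2 * hL.eigenvalues j) ∧
      ∃ k, 2 * hL.eigenvalues j ≤ hT.eigenvalues k := by
  refine exists_le_and_exists_ge_of_norm_exp_apply_sq X hT
    (hL.eigenvectorBasis.orthonormal.ne_zero j) ?_
  rw [norm_toEuclideanCLM_apply_sq, h, map_mul, ContinuousLinearMap.mul_def,
    ContinuousLinearMap.comp_apply, hL.toEuclideanCLM_exp_eigenvectorBasis, map_smul,
    hL.toEuclideanCLM_exp_eigenvectorBasis, smul_smul, inner_smul_left, inner_self_eq_norm_sq_to_K,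
    hL.eigenvectorBasis.orthonormal.1 j, ← Complex.ofReal_mul, Complex.conj_ofReal,
    ← Real.exp_add, ← two_mul]
  simp only [RCLike.ofReal_one, one_pow, mul_one, RCLike.re_to_complex, Complex.ofReal_re]

end Matrix

theorem sum_sq_le_sum_sq_of_monotone {x τ : Fin 3 → ℝ} (hx : Monotone x) (hτ : Monotone τ)
    (h0 : τ 0 ≤ x 0) (h2 : x 2 ≤ τ 2) (hsum : ∑ i, x i = ∑ i, τ i) :
    ∑ i, x i ^ 2 ≤ ∑ i, τ i ^ 2 := by
  simp only [Fin.sum_univ_three] at hsum ⊢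
  have hx01 := hx (show (0 : Fin 3) ≤ 1 by decide)
  have hx12 := hx (show (1 : Fin 3) ≤ 2 by decide)
  have hτ01 := hτ (show (0 : Fin 3) ≤ 1 by decide)
  have hτ12 := hτ (show (1 : Fin 3) ≤ 2 by decide)
  -- `∑ x² - ∑ τ² = (τ₂ - x₂)(x₁ + τ₁ - x₂ - τ₂) + (x₀ - τ₀)(x₀ + τ₀ - x₁ - τ₁)`
  -- `+ (∑ x - ∑ τ)(x₁ + τ₁)`, and the first two products are nonpositive.
  have he : (x 0 + x 1 + x 2 - (τ 0 + τ 1 + τ 2)) * (x 1 + τ 1) = 0 := by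
    rw [hsum, sub_self, zero_mul]
  nlinarith [mul_nonneg (sub_nonneg.2 h2) (sub_nonneg.2 hx12),
    mul_nonneg (sub_nonneg.2 h2) (sub_nonneg.2 hτ12),
    mul_nonneg (sub_nonneg.2 h0) (sub_nonneg.2 hx01),
    mul_nonneg (sub_nonneg.2 h0) (sub_nonneg.2 hτ01)]

theorem sum_sq_le_sum_sq_of_exists_le_of_exists_ge {x τ : Fin 3 → ℝ}
    (hlo : ∀ i, ∃ j, τ j ≤ x i) (hhi : ∀ i, ∃ j, x i ≤ τ j) (hsum : ∑ i, x i = ∑ i, τ i) :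
    ∑ i, x i ^ 2 ≤ ∑ i, τ i ^ 2 := by
  set σ := Tuple.sort x
  set π := Tuple.sort τ
  have hτπ : ∀ j, τ (π 0) ≤ τ j ∧ τ j ≤ τ (π 2) := fun j => by
    obtain ⟨k, rfl⟩ := π.surjective j
    exact ⟨Tuple.monotone_sort τ (Fin.zero_le k), Tuple.monotone_sort τ (Fin.le_last k)⟩
  have h0 : τ (π 0) ≤ x (σ 0) := by
    obtain ⟨j, hj⟩ := hlo (σ 0)
    exact (hτπ j).1.trans hj
  have h2 : x (σ 2) ≤ τ (π 2) := by
    obtain ⟨j, hj⟩ := hhi (σ 2)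
    exact hj.trans (hτπ j).2
  rw [← Equiv.sum_comp σ x, ← Equiv.sum_comp π τ] at hsum
  rw [← Equiv.sum_comp σ (fun i => x i ^ 2), ← Equiv.sum_comp π (fun i => τ i ^ 2)]
  exact sum_sq_le_sum_sq_of_monotone (Tuple.monotone_sort x) (Tuple.monotone_sort τ) h0 h2 hsum

theorem frobSq_le_of_conjTranspose_exp_mul_exp_eq {X L : Matrix (Fin 3) (Fin 3) ℂ}
    (hL : L.IsHermitian) (h : (exp X)ᴴ * exp X = exp L * exp L) : frobSq L ≤ frobSq X := by
  have hT := isHermitian_add_transpose_self X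
  have hbounds := exists_le_and_exists_ge_two_mul_eigenvalues hL hT h
  have hmaj := sum_sq_le_sum_sq_of_exists_le_of_exists_ge (x := fun j => 2 * hL.eigenvalues j)
    (fun j => (hbounds j).1) (fun j => (hbounds j).2) (by
      rw [sum_eigenvalues_add_conjTranspose X hT,
        re_trace_eq_sum_eigenvalues_of_conjTranspose_exp_mul_exp hL h, Finset.mul_sum])
  have hsym := sum_norm_sq_add_conjTranspose_le X
  rw [hT.sum_norm_sq_eq_sum_eigenvalues_sq] at hsym
  simp only [mul_pow, ← Finset.mul_sum] at hmaj
  rw [frobSq, frobSq, hL.sum_norm_sq_eq_sum_eigenvalues_sq]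
  linarith

theorem min_frobSq_log_general (Z Up H L : Matrix (Fin 3) (Fin 3) ℂ)
    (hUp : Up ∈ Matrix.unitaryGroup (Fin 3) ℂ)
    (hpolar : Z = Up * H)
    (hL : L.IsHermitian) (hexpL : NormedSpace.exp L = H) :
    IsLeast {r : ℝ | ∃ Q ∈ Matrix.unitaryGroup (Fin 3) ℂ,
        ∃ X : Matrix (Fin 3) (Fin 3) ℂ,
          NormedSpace.exp X = Qᴴ * Z ∧ r = frobSq X} (frobSq L) ∧
    NormedSpace.exp L = Upᴴ * Z := by
  have hUpH : Upᴴ * Z = H := by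
    rw [hpolar, ← Matrix.mul_assoc, ← star_eq_conjTranspose, Unitary.star_mul_self_of_mem hUp,
      Matrix.one_mul]
  refine ⟨⟨⟨Up, hUp, L, hexpL.trans hUpH.symm, rfl⟩, ?_⟩, hexpL.trans hUpH.symm⟩
  rintro _ ⟨Q, hQ, X, hexpX, rfl⟩
  refine frobSq_le_of_conjTranspose_exp_mul_exp_eq hL ?_
  calc (exp X)ᴴ * exp X = star (star Q * Z) * (star Q * Z) := by rw [hexpX]; rfl
    _ = star Z * Z := star_mul_self_unitary_mul (Unitary.star_mem hQ) Z
    _ = star H * H := by rw [hpolar, star_mul_self_unitary_mul hUp]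
    _ = exp L * exp L := by rw [← hexpL, star_eq_conjTranspose, hL.exp.eq]

/-- For nonsingular `Z ∈ ℂ³ˣ³` with polar decomposition `Z = U_p H`, the minimum of
`‖X‖_F²` over unitary `Q` and all logarithms `X` of `Q* Z` equals `‖log H‖_F²`,
attained at `Q = U_p` with `X = log H` the principal logarithm. -/
theorem min_frobSq_log (Z Up H L : Matrix (Fin 3) (Fin 3) ℂ)
    (hZ : IsUnit Z.det)
    (hUp : Up ∈ Matrix.unitaryGroup (Fin 3) ℂ)
    (hH : H.PosDef) (hpolar : Z = Up * H)
    (hL : L.IsHermitian) (hexpL : NormedSpace.exp L = H) :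
    IsLeast {r : ℝ | ∃ Q ∈ Matrix.unitaryGroup (Fin 3) ℂ,
        ∃ X : Matrix (Fin 3) (Fin 3) ℂ,
          NormedSpace.exp X = Qᴴ * Z ∧ r = frobSq X} (frobSq L) ∧
    NormedSpace.exp L = Upᴴ * Z :=
  min_frobSq_log_general Z Up H L hUp hpolar hL hexpL
end

section
/- The function g : (1, ∞) → ℝ⁺ defined by g(ξ) = (arcosh ξ)² / (ξ² − 1) is strictly decreasing. -/
/-!
Substituting `ξ = cosh t` with `t = arcosh ξ > 0` turns `ξ² − 1` into `sinh² t`, so the function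
becomes `(t / sinh t)²`. Since `tanh t < t` for `t > 0`, the derivative
`(sinh t − t cosh t) / sinh² t` of `t / sinh t` is negative, and `arcosh` is increasing.
-/

/-- Inverse hyperbolic cosine. -/
noncomputable def arcosh (x : ℝ) : ℝ := Real.log (x + Real.sqrt (x ^ 2 - 1))

theorem arcosh_eq_real_arcosh : arcosh = Real.arcosh := rfl

namespace Real

open Set

theorem sinh_lt_mul_cosh {t : ℝ} (ht : 0 < t) : sinh t < t * cosh t := by
  have hmono : StrictMonoOn (fun s ↦ s * cosh s - sinh s) (Ici 0) := by
    refine strictMonoOn_of_deriv_pos (convex_Ici 0) (by fun_prop) fun s hs ↦ ?_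
    rw [interior_Ici] at hs
    have hderiv : HasDerivAt (fun s ↦ s * cosh s - sinh s) (1 * cosh s + s * sinh s - cosh s) s :=
      ((hasDerivAt_id s).mul (hasDerivAt_cosh s)).sub (hasDerivAt_sinh s)
    rw [hderiv.deriv]
    linarith [mul_pos hs (sinh_pos_iff.2 hs)]
  simpa using hmono self_mem_Ici ht.le ht

theorem strictAntiOn_self_div_sinh : StrictAntiOn (fun t ↦ t / sinh t) (Ioi 0) := by
  refine strictAntiOn_of_deriv_neg (convex_Ioi 0)
    (continuousOn_id.div continuous_sinh.continuousOn fun t ht ↦ (sinh_pos_iff.2 ht).ne')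
    fun t ht ↦ ?_
  rw [interior_Ioi] at ht
  have hsinh := sinh_pos_iff.2 ht
  have hderiv : HasDerivAt (fun s ↦ s / sinh s) ((1 * sinh t - t * cosh t) / sinh t ^ 2) t :=
    (hasDerivAt_id t).div (hasDerivAt_sinh t) hsinh.ne'
  rw [hderiv.deriv]
  exact div_neg_of_neg_of_pos (by linarith [sinh_lt_mul_cosh ht]) (by positivity)

theorem arcosh_sq_div_sq_sub_one {x : ℝ} (hx : 1 ≤ x) :
    arcosh x ^ 2 / (x ^ 2 - 1) = (arcosh x / sinh (arcosh x)) ^ 2 := by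
  rw [div_pow, sinh_arcosh hx, sq_sqrt (by nlinarith)]

end Real

/-- The function `g(ξ) = (arcosh ξ)² / (ξ² − 1)` is strictly decreasing on `(1, ∞)`. -/
theorem strictAntiOn_arcosh_sq_div : StrictAntiOn
    (fun ξ : ℝ => (arcosh ξ) ^ 2 / (ξ ^ 2 - 1)) (Set.Ioi 1) := by
  intro a ha b hb hab
  have ha₀ : 0 < a := zero_lt_one.trans ha
  have hb₀ : 0 < b := zero_lt_one.trans hb
  have hpos := Real.arcosh_pos hb
  simp only [arcosh_eq_real_arcosh, Real.arcosh_sq_div_sq_sub_one ha.le,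
    Real.arcosh_sq_div_sq_sub_one hb.le]
  have hanti := Real.strictAntiOn_self_div_sinh (Real.arcosh_pos ha) hpos
    (Real.strictMonoOn_arcosh ha₀ hb₀ hab)
  exact pow_lt_pow_left₀ hanti (div_pos hpos (Real.sinh_pos_iff.2 hpos)).le two_ne_zero
end
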